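/- arXiv:1905.12121 — 8 statements merged into one kernel-verified Lean document; each statement's English description precedes it below -/
import Mathlib

section
/- Let d ∈ ℕ, let θ₀, θ* ∈ ℝ^d with θ₀ ≠ θ*, let R > 0 and η > 0. Set λ = ‖θ*‖, D = ‖θ₀ − θ*‖, γ₀ = min(R/D, 1/η), ρ = 1 − ηγ₀/(1 + exp(λ²γ₀)), and C = −1/log ρ. Then 0 < ρ < 1, and for every ε with 0 < ε < D and every natural number K with K ≥ C·log(D/ε), there exists a finite sequence x_0, …, x_{K−1} ∈ ℝ^d with ‖x_t‖ ≤ R for every t < K such that the OGD iterates θ_{t+1} = θ_t + η·x_t/(1 + exp(⟨θ_t, x_t⟩)) started from θ₀ satisfy ‖θ_K − θ*‖ ≤ ε. (This is Theorem 1: against the bounded L₂-norm defense with feasible set {x : ‖x‖ ≤ R}, a data poisoner can drive the learnt model to within ε of any target θ* using O(log(1/ε)) poisoning points.) -/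
/-!
The poisoner always feeds the point `x = γ₀ (θ* - θ)`, which points from the current model
to the target. The OGD update then moves `θ` along the segment towards `θ*`, shrinking
`θ - θ*` by the factor `1 - η γ₀ / (1 + exp ⟪θ, x⟫)`. Since `⟪θ, θ* - θ⟫ ≤ ‖θ*‖² / 4`,
this factor is at most `ρ`, and `η γ₀ ≤ 1` keeps it nonnegative (no overshoot). Hence
`‖θ_t - θ*‖ ≤ ρ^t D`, so `‖x_t‖ ≤ γ₀ D ≤ R` and `ρ^K D ≤ ε` once `K ≥ C log (D / ε)`.
-/

open Real
open scoped RealInnerProductSpace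

section InnerProductSpace

variable {E : Type*} [NormedAddCommGroup E] [InnerProductSpace ℝ E]

lemma real_inner_sub_self_le_norm_sq_div_four (p q : E) : ⟪p, q - p⟫ ≤ ‖q‖ ^ 2 / 4 := by
  rw [inner_sub_right, real_inner_self_eq_norm_sq]
  nlinarith [real_inner_le_norm p q, sq_nonneg (‖p‖ - ‖q‖ / 2)]

noncomputable def ogdStep (η : ℝ) (θ x : E) : E :=
  θ + (η / (1 + exp ⟪θ, x⟫)) • x

noncomputable def contractionRate (η γ lam : ℝ) : ℝ :=
  1 - η * γ / (1 + exp (lam ^ 2 * γ))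

lemma contractionRate_pos {η γ : ℝ} (h : η * γ ≤ 1) (lam : ℝ) :
    0 < contractionRate η γ lam := by
  have : η * γ / (1 + exp (lam ^ 2 * γ)) < 1 := by
    rw [div_lt_one (by positivity)]
    linarith [exp_pos (lam ^ 2 * γ)]
  unfold contractionRate
  linarith

lemma contractionRate_lt_one {η γ : ℝ} (h : 0 < η * γ) (lam : ℝ) :
    contractionRate η γ lam < 1 := by
  unfold contractionRate
  have : 0 < η * γ / (1 + exp (lam ^ 2 * γ)) := by positivity
  linarith

lemma ogdStep_smul_sub_sub (η γ : ℝ) (θ θs : E) :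
    ogdStep η θ (γ • (θs - θ)) - θs
      = (1 - η * γ / (1 + exp ⟪θ, γ • (θs - θ)⟫)) • (θ - θs) := by
  unfold ogdStep
  generalize ⟪θ, γ • (θs - θ)⟫ = s
  have : 1 + exp s ≠ 0 := by positivity
  match_scalars <;> field_simp <;> ring

lemma norm_ogdStep_smul_sub_sub_le {η γ : ℝ} (hη : 0 ≤ η) (hγ : 0 ≤ γ) (hηγ : η * γ ≤ 1)
    (θ θs : E) :
    ‖ogdStep η θ (γ • (θs - θ)) - θs‖ ≤ contractionRate η γ ‖θs‖ * ‖θ - θs‖ := by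
  have hinner : ⟪θ, γ • (θs - θ)⟫ ≤ ‖θs‖ ^ 2 * γ := by
    rw [real_inner_smul_right, mul_comm]
    gcongr
    linarith [real_inner_sub_self_le_norm_sq_div_four θ θs, sq_nonneg ‖θs‖]
  have hfactor : 1 - η * γ / (1 + exp ⟪θ, γ • (θs - θ)⟫) ≤ contractionRate η γ ‖θs‖ := by
    unfold contractionRate
    have : 0 ≤ η * γ := mul_nonneg hη hγ
    gcongr
  have hfactor_nonneg : 0 ≤ 1 - η * γ / (1 + exp ⟪θ, γ • (θs - θ)⟫) := by
    have : η * γ / (1 + exp ⟪θ, γ • (θs - θ)⟫) ≤ 1 := by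
      rw [div_le_one (by positivity)]
      linarith [exp_pos ⟪θ, γ • (θs - θ)⟫]
    linarith
  rw [ogdStep_smul_sub_sub, norm_smul, norm_of_nonneg hfactor_nonneg]
  gcongr

noncomputable def poisonedIterates (η γ : ℝ) (θs θ₀ : E) : ℕ → E
  | 0 => θ₀
  | t + 1 =>
    ogdStep η (poisonedIterates η γ θs θ₀ t) (γ • (θs - poisonedIterates η γ θs θ₀ t))

lemma norm_poisonedIterates_sub_le {η γ : ℝ} (hη : 0 ≤ η) (hγ : 0 ≤ γ) (hηγ : η * γ ≤ 1)
    (θs θ₀ : E) (t : ℕ) :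
    ‖poisonedIterates η γ θs θ₀ t - θs‖ ≤ contractionRate η γ ‖θs‖ ^ t * ‖θ₀ - θs‖ := by
  induction t with
  | zero => simp [poisonedIterates]
  | succ t ih =>
    calc ‖poisonedIterates η γ θs θ₀ (t + 1) - θs‖
        ≤ contractionRate η γ ‖θs‖ * ‖poisonedIterates η γ θs θ₀ t - θs‖ :=
          norm_ogdStep_smul_sub_sub_le hη hγ hηγ _ _
      _ ≤ contractionRate η γ ‖θs‖ * (contractionRate η γ ‖θs‖ ^ t * ‖θ₀ - θs‖) := by
          gcongr
          exact (contractionRate_pos hηγ _).le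
      _ = contractionRate η γ ‖θs‖ ^ (t + 1) * ‖θ₀ - θs‖ := by ring

end InnerProductSpace

lemma pow_mul_le_of_neg_inv_log_mul_log_le {ρ D ε : ℝ} {K : ℕ} (hρ0 : 0 < ρ) (hρ1 : ρ < 1)
    (hD : 0 < D) (hε : 0 < ε) (hK : -1 / log ρ * log (D / ε) ≤ K) : ρ ^ K * D ≤ ε := by
  have hlogρ : 0 < -log ρ := neg_pos.mpr (log_neg hρ0 hρ1)
  have hKlog : log (D / ε) ≤ K * -log ρ := by
    rwa [div_mul_eq_mul_div, neg_one_mul, ← neg_div_neg_eq, neg_neg, div_le_iff₀ hlogρ] at hK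
  rw [← log_le_log_iff (by positivity) hε, log_mul (by positivity) hD.ne', log_pow]
  rw [log_div hD.ne' hε.ne'] at hKlog
  linarith

theorem stmt_0 (d : ℕ) (θ₀ θs : EuclideanSpace ℝ (Fin d)) (hne : θ₀ ≠ θs)
    (R η : ℝ) (hR : 0 < R) (hη : 0 < η)
    (lam D γ₀ ρ C : ℝ)
    (hlam : lam = ‖θs‖) (hD : D = ‖θ₀ - θs‖)
    (hγ₀ : γ₀ = min (R / D) (1 / η))
    (hρ : ρ = 1 - η * γ₀ / (1 + Real.exp (lam ^ 2 * γ₀)))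
    (hC : C = -1 / Real.log ρ) :
    0 < ρ ∧ ρ < 1 ∧
      ∀ ε : ℝ, 0 < ε → ε < D →
        ∀ K : ℕ, C * Real.log (D / ε) ≤ K →
          ∃ x θ : ℕ → EuclideanSpace ℝ (Fin d),
            θ 0 = θ₀ ∧
            (∀ t, θ (t + 1)
              = θ t + (η / (1 + Real.exp ((inner ℝ (θ t) (x t) : ℝ)))) • x t) ∧
            (∀ t < K, ‖x t‖ ≤ R) ∧
            ‖θ K - θs‖ ≤ ε := by
  have hD0 : 0 < D := hD ▸ norm_pos_iff.mpr (sub_ne_zero.mpr hne)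
  have hγ : 0 < γ₀ := hγ₀ ▸ lt_min (div_pos hR hD0) (one_div_pos.mpr hη)
  have hγD : γ₀ * D ≤ R := (le_div_iff₀ hD0).mp (hγ₀ ▸ min_le_left _ _)
  have hηγ : η * γ₀ ≤ 1 := by
    rw [mul_comm, ← le_div_iff₀ hη]
    exact hγ₀ ▸ min_le_right _ _
  have hρ' : ρ = contractionRate η γ₀ ‖θs‖ := by rw [hρ, hlam, contractionRate]
  have hρ0 : 0 < ρ := hρ' ▸ contractionRate_pos hηγ _
  have hρ1 : ρ < 1 := hρ' ▸ contractionRate_lt_one (mul_pos hη hγ) _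
  have hdist (t : ℕ) : ‖poisonedIterates η γ₀ θs θ₀ t - θs‖ ≤ ρ ^ t * D :=
    hρ' ▸ hD ▸ norm_poisonedIterates_sub_le hη.le hγ.le hηγ θs θ₀ t
  refine ⟨hρ0, hρ1, fun ε hε _ K hK => ⟨fun t => γ₀ • (θs - poisonedIterates η γ₀ θs θ₀ t),
    poisonedIterates η γ₀ θs θ₀, rfl, fun t => rfl, fun t _ => ?_, ?_⟩⟩
  · calc ‖γ₀ • (θs - poisonedIterates η γ₀ θs θ₀ t)‖
        = γ₀ * ‖poisonedIterates η γ₀ θs θ₀ t - θs‖ := by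
          rw [norm_smul, norm_of_nonneg hγ.le, norm_sub_rev]
      _ ≤ γ₀ * (1 * D) := by
          gcongr
          exact (hdist t).trans (by gcongr; exact pow_le_one₀ hρ0.le hρ1.le)
      _ ≤ R := by linarith
  · exact (hdist K).trans (pow_mul_le_of_neg_inv_log_mul_log_le hρ0 hρ1 hD0 hε (hC ▸ hK))
end

section
/- Let d ∈ ℕ, let θ, θ* ∈ ℝ^d, set λ = ‖θ*‖, and let η > 0, γ > 0 satisfy ηγ ≤ 1. Define θ' = θ + η·γ·(θ* − θ)/(1 + exp(γ·⟨θ, θ* − θ⟩)), i.e., the OGD logistic-regression update of θ on the example (γ(θ* − θ), +1). Then ‖θ' − θ*‖ ≤ (1 − ηγ/(1 + exp(λ²γ)))·‖θ − θ*‖. -/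
/-! The update moves θ a fraction `c = ηγ / (1 + exp(γ⟨θ, θ* − θ⟩))` of the way towards θ*, so
`‖θ' − θ*‖ = (1 − c)‖θ − θ*‖` as long as `c ≤ 1`, which `ηγ ≤ 1` guarantees. Since
`⟨θ, θ* − θ⟩ ≤ ‖θ‖‖θ*‖ − ‖θ‖² ≤ ‖θ*‖²/4 ≤ λ²`, the step fraction is at least `ηγ / (1 + exp(λ²γ))`. -/

open Real

theorem real_inner_sub_self_le_norm_sq_div_four_s1 {E : Type*} [NormedAddCommGroup E]
    [InnerProductSpace ℝ E] (x y : E) : inner ℝ x (y - x) ≤ ‖y‖ ^ 2 / 4 := by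
  rw [inner_sub_right, real_inner_self_eq_norm_sq]
  nlinarith [real_inner_le_norm x y, sq_nonneg (‖x‖ - ‖y‖ / 2)]

theorem norm_add_smul_sub_sub_eq {E : Type*} [SeminormedAddCommGroup E] [NormedSpace ℝ E]
    (x y : E) {c : ℝ} (hc : c ≤ 1) : ‖x + c • (y - x) - y‖ = (1 - c) * ‖x - y‖ := by
  have hsegment : x + c • (y - x) - y = (1 - c) • (x - y) := by module
  rw [hsegment, norm_smul, Real.norm_eq_abs, abs_of_nonneg (by linarith)]

theorem stmt_1 (d : ℕ) (θ θs : EuclideanSpace ℝ (Fin d))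
    (lam : ℝ) (hlam : lam = ‖θs‖)
    (η γ : ℝ) (hη : 0 < η) (hγ : 0 < γ) (hηγ : η * γ ≤ 1)
    (θ' : EuclideanSpace ℝ (Fin d))
    (hθ' : θ' = θ + ((η * γ) /
      (1 + Real.exp (γ * (inner ℝ θ (θs - θ) : ℝ)))) • (θs - θ)) :
    ‖θ' - θs‖ ≤ (1 - η * γ / (1 + Real.exp (lam ^ 2 * γ))) * ‖θ - θs‖ := by
  have hstep_le_one : η * γ / (1 + exp (γ * inner ℝ θ (θs - θ))) ≤ 1 :=
    (div_le_one (by positivity)).2 (by linarith [exp_pos (γ * inner ℝ θ (θs - θ))])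
  have hexponent : γ * inner ℝ θ (θs - θ) ≤ lam ^ 2 * γ := by
    rw [mul_comm, hlam]
    gcongr
    linarith [real_inner_sub_self_le_norm_sq_div_four_s1 θ θs, sq_nonneg ‖θs‖]
  rw [hθ', norm_add_smul_sub_sub_eq θ θs hstep_le_one]
  gcongr
end

section
/- Let d ∈ ℕ, let θ₀, θ* ∈ ℝ^d with θ₀ ≠ θ*, let R > 0, η > 0, and set γ₀ = min(R/‖θ₀ − θ*‖, 1/η). Define the sequence θ_{t+1} = θ_t + η·γ₀·(θ* − θ_t)/(1 + exp(γ₀·⟨θ_t, θ* − θ_t⟩)). Then for every t ∈ ℕ, ‖θ_t − θ*‖ ≤ ‖θ₀ − θ*‖, and consequently every poisoning example x_t = γ₀·(θ* − θ_t) used by this attack satisfies ‖x_t‖ ≤ R, i.e., lies in the feasible set of the bounded L₂-norm defense with radius R. -/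
/-!
Each iterate moves from θ_t towards θ* by the fraction c_t = ηγ₀ / (1 + exp(·)) of the way, and
γ₀ ≤ 1/η gives 0 ≤ c_t ≤ 1. Hence θ_{t+1} lies on the segment [θ_t, θ*], the distance to θ* never
increases, and ‖x_t‖ = γ₀ ‖θ_t − θ*‖ ≤ γ₀ ‖θ₀ − θ*‖ ≤ R.
-/

open AffineMap

section SegmentIteration

variable {E : Type*} [NormedAddCommGroup E] [NormedSpace ℝ E]

lemma norm_add_smul_sub_sub_le {x y : E} {c : ℝ} (hc₀ : 0 ≤ c) (hc₁ : c ≤ 1) :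
    ‖x + c • (y - x) - y‖ ≤ ‖x - y‖ := by
  have hline := dist_lineMap_right (𝕜 := ℝ) x y c
  rw [lineMap_apply_module', dist_eq_norm, dist_eq_norm, add_comm] at hline
  rw [hline, Real.norm_of_nonneg (sub_nonneg.mpr hc₁)]
  exact mul_le_of_le_one_left (norm_nonneg _) (by linarith)

lemma antitone_norm_sub_of_step_toward {θ : ℕ → E} {y : E} {c : ℕ → ℝ}
    (hc₀ : ∀ t, 0 ≤ c t) (hc₁ : ∀ t, c t ≤ 1) (hθ : ∀ t, θ (t + 1) = θ t + c t • (y - θ t)) :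
    Antitone fun t => ‖θ t - y‖ :=
  antitone_nat_of_succ_le fun t => hθ t ▸ norm_add_smul_sub_sub_le (hc₀ t) (hc₁ t)

end SegmentIteration

lemma div_one_add_exp_mem_Icc {a : ℝ} (ha₀ : 0 ≤ a) (ha₁ : a ≤ 1) (s : ℝ) :
    a / (1 + Real.exp s) ∈ Set.Icc 0 1 := by
  have hpos : 0 < 1 + Real.exp s := by positivity
  refine ⟨div_nonneg ha₀ hpos.le, (div_le_one hpos).mpr ?_⟩
  linarith [Real.exp_pos s]

lemma div_mul_le_of_nonneg (b : ℝ) {a : ℝ} (ha : 0 ≤ a) : a / b * b ≤ a := by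
  rcases eq_or_ne b 0 with rfl | hb
  · simpa using ha
  · rw [div_mul_cancel₀ a hb]

theorem stmt_3_general (d : ℕ) (θ₀ θs : EuclideanSpace ℝ (Fin d))
    (R η : ℝ) (hR : 0 < R) (hη : 0 < η)
    (γ₀ : ℝ) (hγ₀ : γ₀ = min (R / ‖θ₀ - θs‖) (1 / η))
    (θ : ℕ → EuclideanSpace ℝ (Fin d)) (hθ0 : θ 0 = θ₀)
    (hθ : ∀ t, θ (t + 1) = θ t + ((η * γ₀) /
      (1 + Real.exp (γ₀ * (inner ℝ (θ t) (θs - θ t) : ℝ)))) • (θs - θ t)) :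
    (∀ t : ℕ, ‖θ t - θs‖ ≤ ‖θ₀ - θs‖) ∧
    (∀ t : ℕ, ‖γ₀ • (θs - θ t)‖ ≤ R) := by
  have hγ : 0 ≤ γ₀ := hγ₀ ▸ le_min (by positivity) (by positivity)
  have hηγ : η * γ₀ ≤ 1 := by
    rw [← mul_one_div_cancel hη.ne']
    exact mul_le_mul_of_nonneg_left (hγ₀ ▸ min_le_right _ _) hη.le
  have hstep t := div_one_add_exp_mem_Icc (mul_nonneg hη.le hγ) hηγ
    (γ₀ * (inner ℝ (θ t) (θs - θ t) : ℝ))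
  have hdist : ∀ t, ‖θ t - θs‖ ≤ ‖θ₀ - θs‖ := fun t =>
    hθ0 ▸ antitone_norm_sub_of_step_toward (fun t => (hstep t).1) (fun t => (hstep t).2) hθ
      (Nat.zero_le t)
  refine ⟨hdist, fun t => ?_⟩
  calc ‖γ₀ • (θs - θ t)‖ = γ₀ * ‖θ t - θs‖ := by
        rw [norm_smul, norm_sub_rev, Real.norm_of_nonneg hγ]
    _ ≤ γ₀ * ‖θ₀ - θs‖ := mul_le_mul_of_nonneg_left (hdist t) hγ
    _ ≤ R / ‖θ₀ - θs‖ * ‖θ₀ - θs‖ :=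
        mul_le_mul_of_nonneg_right (hγ₀ ▸ min_le_left _ _) (norm_nonneg _)
    _ ≤ R := div_mul_le_of_nonneg _ hR.le

theorem stmt_3 (d : ℕ) (θ₀ θs : EuclideanSpace ℝ (Fin d)) (hne : θ₀ ≠ θs)
    (R η : ℝ) (hR : 0 < R) (hη : 0 < η)
    (γ₀ : ℝ) (hγ₀ : γ₀ = min (R / ‖θ₀ - θs‖) (1 / η))
    (θ : ℕ → EuclideanSpace ℝ (Fin d)) (hθ0 : θ 0 = θ₀)
    (hθ : ∀ t, θ (t + 1) = θ t + ((η * γ₀) /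
      (1 + Real.exp (γ₀ * (inner ℝ (θ t) (θs - θ t) : ℝ)))) • (θs - θ t)) :
    (∀ t : ℕ, ‖θ t - θs‖ ≤ ‖θ₀ - θs‖) ∧
    (∀ t : ℕ, ‖γ₀ • (θs - θ t)‖ ≤ R) :=
  stmt_3_general d θ₀ θs R η hR hη γ₀ hγ₀ θ hθ0 hθ
end

section
/- Let d ∈ ℕ, let F ⊆ ℝ^d, and suppose there exists a convex set G ⊆ ℝ^d with F ⊆ G. Let θ₀, θ* ∈ ℝ^d with θ* ≠ θ₀, and suppose that r·(θ* − θ₀) ∉ G for every real r > 0. Then for every η > 0, every K ∈ ℕ, and every finite sequence x_0, …, x_{K−1} with each x_t ∈ F, the OGD iterates θ_{t+1} = θ_t + η·x_t/(1 + exp(⟨θ_t, x_t⟩)) started from θ₀ satisfy θ_K ≠ θ*. (This is part 2 of Theorem 2: no data poisoner restricted to F can output the target θ*.) -/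
/-!
Each OGD step adds a positive multiple of the current input, so `θ_K - θ₀ = ∑ c_t x_t` with
all `c_t > 0`. For `K > 0`, rescaling by `(∑ c_t)⁻¹` turns this into a convex combination of
inputs, which lies in the convex set `G ⊇ F`; hence `θ_K - θ₀` is a positive multiple of a point
of `G`, which the ray condition forbids for `θ_K = θs`. For `K = 0`, `θ_K = θ₀ ≠ θs`.
-/

open Finset

theorem Convex.exists_pos_smul_sum_smul_mem {ι E : Type*} [AddCommGroup E] [Module ℝ E]
    {G : Set E} (hG : Convex ℝ G) {t : Finset ι} (ht : t.Nonempty) {w : ι → ℝ} {z : ι → E}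
    (hw : ∀ i ∈ t, 0 < w i) (hz : ∀ i ∈ t, z i ∈ G) :
    ∃ r : ℝ, 0 < r ∧ r • ∑ i ∈ t, w i • z i ∈ G := by
  have hsum : 0 < ∑ i ∈ t, w i := sum_pos hw ht
  exact ⟨(∑ i ∈ t, w i)⁻¹, inv_pos.mpr hsum,
    hG.centerMass_mem (fun i hi => (hw i hi).le) hsum hz⟩

theorem sub_eq_sum_range_of_succ_eq_add {E : Type*} [AddCommGroup E] {θ v : ℕ → E}
    (hstep : ∀ t, θ (t + 1) = θ t + v t) (n : ℕ) :
    θ n - θ 0 = ∑ t ∈ range n, v t := by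
  rw [← sum_range_sub]
  exact sum_congr rfl fun t _ => by rw [hstep, add_sub_cancel_left]

theorem stmt_5 (d : ℕ) (F G : Set (EuclideanSpace ℝ (Fin d)))
    (hFG : F ⊆ G) (hG : Convex ℝ G)
    (θ₀ θs : EuclideanSpace ℝ (Fin d)) (hne : θs ≠ θ₀)
    (hray : ∀ r : ℝ, 0 < r → r • (θs - θ₀) ∉ G) :
    ∀ η : ℝ, 0 < η → ∀ K : ℕ,
      ∀ x θ : ℕ → EuclideanSpace ℝ (Fin d),
        (∀ t < K, x t ∈ F) →
        θ 0 = θ₀ →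
        (∀ t, θ (t + 1)
          = θ t + (η / (1 + Real.exp ((inner ℝ (θ t) (x t) : ℝ)))) • x t) →
        θ K ≠ θs := by
  intro η hη K x θ hx h0 hstep hK
  rcases K.eq_zero_or_pos with rfl | hKpos
  · exact hne (hK.symm.trans h0)
  obtain ⟨r, hr, hmem⟩ : ∃ r : ℝ, 0 < r ∧ r • (θs - θ₀) ∈ G := by
    rw [← hK, ← h0, sub_eq_sum_range_of_succ_eq_add hstep]
    exact hG.exists_pos_smul_sum_smul_mem (nonempty_range_iff.mpr hKpos.ne')
      (fun t _ => div_pos hη (by positivity)) (fun t ht => hFG (hx t (mem_range.mp ht)))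
  exact hray r hr hmem
end

section
/- Let d ∈ ℕ, let μ₊, μ₋ ∈ ℝ^d, let τ ∈ ℝ with τ > min(‖μ₊‖, ‖μ₋‖), let R > 0, and let θ₀, θ* ∈ ℝ^d with θ₀ ≠ θ*, η > 0. Define the one-sided feasible set F = {x ∈ ℝ^d : ‖x − μ₊‖ ≤ τ and ‖x‖ ≤ R} ∪ {x ∈ ℝ^d : ‖x + μ₋‖ ≤ τ and ‖x‖ ≤ R}. Then there exists a constant C > 0 such that for every ε with 0 < ε < ‖θ₀ − θ*‖ and every natural number K with K ≥ C·log(‖θ₀ − θ*‖/ε), there exist x_0, …, x_{K−1} ∈ F such that the OGD iterates θ_{t+1} = θ_t + η·x_t/(1 + exp(⟨θ_t, x_t⟩)) started from θ₀ satisfy ‖θ_K − θ*‖ ≤ ε. (This is part 1 of the lemma on the L₂-distance-to-centroid defense: if τ > min(‖μ₊‖, ‖μ₋‖), a rapid attack exists.) -/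
/-!
The closed ball of radius `r = min (τ - min ‖μ₊‖ ‖μ₋‖) R` about the origin lies in the feasible
set, and an input of norm at most `r` can move `θ` by any prescribed vector of norm at most
`η r / (1 + exp (r ‖θ‖))`. So while `θ` stays within `D = ‖θ₀ - θ*‖` of `θ*` the attacker can move
it a fixed fraction `β` of the way towards `θ*`, giving `‖θ_t - θ*‖ = (1 - β)^t D`; hence
`K ≥ log (D / ε) / log (1 / (1 - β))` steps suffice.
-/

open Real Metric

section LogisticOGD

variable {E : Type*} [NormedAddCommGroup E] [InnerProductSpace ℝ E]

noncomputable def logisticOGDStep (η : ℝ) (θ x : E) : E :=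
  θ + (η / (1 + exp (inner ℝ θ x))) • x

/- The step length `η s / (1 + exp (s ⟪θ, u⟫))` along a unit vector `u` vanishes at `s = 0` and is
at least `η r / (1 + exp (r ‖θ‖))` at `s = r`, so by continuity it takes every value in between. -/
theorem exists_norm_le_logisticOGDStep_eq {η r : ℝ} (hη : 0 ≤ η) (hr : 0 ≤ r) (θ w : E)
    (hw : ‖w‖ ≤ η * r / (1 + exp (r * ‖θ‖))) :
    ∃ x : E, ‖x‖ ≤ r ∧ logisticOGDStep η θ x = θ + w := by
  rcases eq_or_ne w 0 with rfl | hw0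
  · exact ⟨0, by simpa using hr, by simp [logisticOGDStep]⟩
  set u : E := ‖w‖⁻¹ • w
  have hu : ‖u‖ = 1 := norm_smul_inv_norm hw0
  set f : ℝ → ℝ := fun s => η * s / (1 + exp (s * inner ℝ θ u))
  have hf : ContinuousOn f (Set.Icc 0 r) := by
    refine Continuous.continuousOn (Continuous.div (by fun_prop) (by fun_prop) fun s => ?_)
    positivity
  have hfr : η * r / (1 + exp (r * ‖θ‖)) ≤ f r := by
    have : r * inner ℝ θ u ≤ r * ‖θ‖ := by
      simpa [hu] using mul_le_mul_of_nonneg_left (real_inner_le_norm θ u) hr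
    exact div_le_div_of_nonneg_left (by positivity) (by positivity) (by gcongr)
  obtain ⟨s, hs, hfs⟩ : ∃ s ∈ Set.Icc 0 r, f s = ‖w‖ :=
    intermediate_value_Icc hr hf ⟨by simp [f], hw.trans hfr⟩
  refine ⟨s • u, by rw [norm_smul, hu, mul_one, norm_of_nonneg hs.1]; exact hs.2, ?_⟩
  have hcoef : η / (1 + exp (inner ℝ θ (s • u))) * s = ‖w‖ := by
    rw [← hfs, real_inner_smul_right]
    ring
  rw [logisticOGDStep, smul_smul, hcoef, smul_inv_smul₀ (norm_ne_zero_iff.2 hw0)]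

theorem exists_norm_le_logisticOGDStep_sub_eq_smul {η r D β : ℝ} (hη : 0 ≤ η) (hr : 0 ≤ r)
    (hβ : 0 ≤ β) {θ θs : E} (hθ : ‖θ - θs‖ ≤ D)
    (hβD : β * D ≤ η * r / (1 + exp (r * (‖θs‖ + D)))) :
    ∃ x : E, ‖x‖ ≤ r ∧ logisticOGDStep η θ x - θs = (1 - β) • (θ - θs) := by
  have hθ_norm : ‖θ‖ ≤ ‖θs‖ + D := by
    simpa using (norm_le_norm_add_norm_sub' θ θs).trans (by linarith)
  have hw : ‖β • (θs - θ)‖ ≤ η * r / (1 + exp (r * ‖θ‖)) := calc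
    ‖β • (θs - θ)‖ = β * ‖θ - θs‖ := by rw [norm_smul, norm_of_nonneg hβ, norm_sub_rev]
    _ ≤ β * D := by gcongr
    _ ≤ η * r / (1 + exp (r * (‖θs‖ + D))) := hβD
    _ ≤ η * r / (1 + exp (r * ‖θ‖)) := by gcongr
  obtain ⟨x, hx, hstep⟩ := exists_norm_le_logisticOGDStep_eq hη hr θ _ hw
  exact ⟨x, hx, by rw [hstep]; module⟩

end LogisticOGD

theorem iterate_sub_eq_pow_smul {E : Type*} [NormedAddCommGroup E] [NormedSpace ℝ E]
    {T : E → E} {θs θ₀ : E} {q D : ℝ} (hq0 : 0 ≤ q) (hq1 : q ≤ 1)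
    (hT : ∀ θ, ‖θ - θs‖ ≤ D → T θ - θs = q • (θ - θs)) (h₀ : ‖θ₀ - θs‖ ≤ D) (t : ℕ) :
    T^[t] θ₀ - θs = q ^ t • (θ₀ - θs) := by
  induction t with
  | zero => simp
  | succ t ih =>
    have hball : ‖T^[t] θ₀ - θs‖ ≤ D := by
      rw [ih, norm_smul, norm_of_nonneg (pow_nonneg hq0 t)]
      exact (mul_le_of_le_one_left (norm_nonneg _) (pow_le_one₀ hq0 hq1)).trans h₀
    rw [Function.iterate_succ_apply', hT _ hball, ih, smul_smul, pow_succ']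

theorem pow_mul_le_of_inv_log_mul_log_le {q D ε : ℝ} {K : ℕ} (hq0 : 0 < q) (hq1 : q < 1)
    (hD : 0 < D) (hε : 0 < ε) (hK : (log q⁻¹)⁻¹ * log (D / ε) ≤ K) : q ^ K * D ≤ ε := by
  have hlog : 0 < log q⁻¹ := log_pos ((one_lt_inv₀ hq0).2 hq1)
  rw [inv_mul_le_iff₀ hlog, log_div hD.ne' hε.ne', log_inv] at hK
  calc q ^ K * D = exp (K * log q + log D) := by
        rw [exp_add, exp_nat_mul, exp_log hq0, exp_log hD]
    _ ≤ exp (log ε) := exp_le_exp.2 (by linarith)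
    _ = ε := exp_log hε

theorem closedBall_subset_feasible {E : Type*} [SeminormedAddCommGroup E] (μp μm : E)
    (τ R : ℝ) :
    closedBall 0 (min (τ - min ‖μp‖ ‖μm‖) R) ⊆
      {x | ‖x - μp‖ ≤ τ ∧ ‖x‖ ≤ R} ∪ {x | ‖x + μm‖ ≤ τ ∧ ‖x‖ ≤ R} := by
  intro x hx
  rw [mem_closedBall_zero_iff, le_min_iff] at hx
  rcases min_choice ‖μp‖ ‖μm‖ with h | h <;> rw [h] at hx
  · exact .inl ⟨(norm_sub_le x μp).trans (by linarith), hx.2⟩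
  · exact .inr ⟨(norm_add_le x μm).trans (by linarith), hx.2⟩

theorem stmt_9 (d : ℕ) (μp μm : EuclideanSpace ℝ (Fin d)) (τ : ℝ)
    (hτ : min ‖μp‖ ‖μm‖ < τ) (R : ℝ) (hR : 0 < R)
    (θ₀ θs : EuclideanSpace ℝ (Fin d)) (hne : θ₀ ≠ θs)
    (η : ℝ) (hη : 0 < η)
    (F : Set (EuclideanSpace ℝ (Fin d)))
    (hF : F = {x | ‖x - μp‖ ≤ τ ∧ ‖x‖ ≤ R} ∪ {x | ‖x + μm‖ ≤ τ ∧ ‖x‖ ≤ R}) :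
    ∃ C : ℝ, 0 < C ∧
      ∀ ε : ℝ, 0 < ε → ε < ‖θ₀ - θs‖ →
        ∀ K : ℕ, C * Real.log (‖θ₀ - θs‖ / ε) ≤ K →
          ∃ x θ : ℕ → EuclideanSpace ℝ (Fin d),
            (∀ t < K, x t ∈ F) ∧
            θ 0 = θ₀ ∧
            (∀ t, θ (t + 1)
              = θ t + (η / (1 + Real.exp ((inner ℝ (θ t) (x t) : ℝ)))) • x t) ∧
            ‖θ K - θs‖ ≤ ε := by
  set r := min (τ - min ‖μp‖ ‖μm‖) R
  have hr : 0 < r := lt_min (sub_pos.2 hτ) hR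
  set D := ‖θ₀ - θs‖
  have hD : 0 < D := norm_pos_iff.2 (sub_ne_zero.2 hne)
  set β := min (1 / 2) (η * r / (1 + exp (r * (‖θs‖ + D))) / D)
  have hβ : 0 < β := lt_min (by norm_num) (by positivity)
  have hβD : β * D ≤ η * r / (1 + exp (r * (‖θs‖ + D))) :=
    (le_div_iff₀ hD).1 (min_le_right _ _)
  have step : ∀ θ, ∃ x ∈ closedBall 0 r,
      ‖θ - θs‖ ≤ D → logisticOGDStep η θ x - θs = (1 - β) • (θ - θs) := fun θ => by
    by_cases hθ : ‖θ - θs‖ ≤ D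
    · obtain ⟨x, hx, hstep⟩ :=
        exists_norm_le_logisticOGDStep_sub_eq_smul hη.le hr.le hβ.le hθ hβD
      exact ⟨x, mem_closedBall_zero_iff.2 hx, fun _ => hstep⟩
    · exact ⟨0, mem_closedBall_self hr.le, fun h => absurd h hθ⟩
  choose policy hpolicy_mem hpolicy using step
  set T := fun θ => logisticOGDStep η θ (policy θ)
  have hβ_le : β ≤ 1 / 2 := min_le_left _ _
  set q := 1 - β
  have hq0 : 0 < q := by linarith
  have hq1 : q < 1 := by linarith
  refine ⟨(log q⁻¹)⁻¹, inv_pos.2 (log_pos ((one_lt_inv₀ hq0).2 hq1)), fun ε hε _ K hK => ?_⟩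
  refine ⟨fun t => policy (T^[t] θ₀), fun t => T^[t] θ₀,
    fun t _ => hF ▸ closedBall_subset_feasible μp μm τ R (hpolicy_mem _), rfl,
    fun t => Function.iterate_succ_apply' T t θ₀, ?_⟩
  rw [iterate_sub_eq_pow_smul hq0.le hq1.le hpolicy le_rfl, norm_smul,
    norm_of_nonneg (pow_nonneg hq0.le K)]
  exact pow_mul_le_of_inv_log_mul_log_le hq0 hq1 hD hε hK
end

section
/- Let d ∈ ℕ, let μ₊, μ₋, θ₀, θ* ∈ ℝ^d with θ₀ ≠ θ*, and set u = θ* − θ₀. Suppose ⟨μ₊, u⟩ < 0 and ⟨μ₋, −u⟩ < 0, and suppose τ ∈ ℝ satisfies τ ≤ min(−⟨μ₊, u⟩/‖u‖, ⟨μ₋, u⟩/‖u‖). Define the one-sided feasible set F = {x ∈ ℝ^d : ‖x − μ₊‖ ≤ τ} ∪ {x ∈ ℝ^d : ‖x + μ₋‖ ≤ τ}. Then for every η > 0, every K ∈ ℕ, and every finite sequence x_0, …, x_{K−1} with each x_t ∈ F, the OGD iterates θ_{t+1} = θ_t + η·x_t/(1 + exp(⟨θ_t, x_t⟩)) started from θ₀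 satisfy θ_K ≠ θ*. (This is part 2 of the lemma on the L₂-distance-to-centroid defense: no data poisoner can output θ*.) -/
/-! Every feasible point lies in the half-space `⟪x, u⟫ ≤ 0`: the ball of radius `τ` around `μ₊`
(resp. `-μ₋`) stays on the far side of the hyperplane `⟪x, u⟫ = 0`, because `τ` is at most the signed
distance from its centre to that hyperplane. An OGD step adds a positive multiple of a feasible
point, so `⟪θ_t, u⟫` never increases. Reaching `θ*` would need `⟪θ*, u⟫ - ⟪θ₀, u⟫ = ‖u‖² > 0`. -/

open RealInnerProductSpace

variable {E : Type*} [NormedAddCommGroup E] [InnerProductSpace ℝ E]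

theorem inner_nonpos_of_norm_sub_le {c u y : E} {τ : ℝ} (hτ : τ ≤ -⟪c, u⟫ / ‖u‖)
    (hy : ‖y - c‖ ≤ τ) : ⟪y, u⟫ ≤ 0 := by
  rcases eq_or_ne u 0 with rfl | hu
  · simp
  have hu' : 0 < ‖u‖ := norm_pos_iff.mpr hu
  have hτu : τ * ‖u‖ ≤ -⟪c, u⟫ := (le_div_iff₀ hu').mp hτ
  have hyc : ⟪y - c, u⟫ ≤ τ * ‖u‖ :=
    (real_inner_le_norm _ _).trans (mul_le_mul_of_nonneg_right hy hu'.le)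
  rw [inner_sub_left] at hyc
  linarith

theorem inner_le_inner_zero_of_nonneg_smul_steps {θ x : ℕ → E} {c : ℕ → ℝ} {u : E} {K : ℕ}
    (hc : ∀ t < K, 0 ≤ c t) (hx : ∀ t < K, ⟪x t, u⟫ ≤ 0)
    (hstep : ∀ t < K, θ (t + 1) = θ t + c t • x t) : ⟪θ K, u⟫ ≤ ⟪θ 0, u⟫ := by
  induction K with
  | zero => rfl
  | succ K ih =>
    have hK := Nat.lt_succ_self K
    calc ⟪θ (K + 1), u⟫ = ⟪θ K, u⟫ + c K * ⟪x K, u⟫ := by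
          rw [hstep K hK, inner_add_left, real_inner_smul_left]
      _ ≤ ⟪θ K, u⟫ := by linarith [mul_nonpos_of_nonneg_of_nonpos (hc K hK) (hx K hK)]
      _ ≤ ⟪θ 0, u⟫ := ih (fun t ht ↦ hc t (ht.trans hK)) (fun t ht ↦ hx t (ht.trans hK))
          (fun t ht ↦ hstep t (ht.trans hK))

theorem stmt_11_general (d : ℕ) (μp μm θ₀ θs : EuclideanSpace ℝ (Fin d))
    (hne : θ₀ ≠ θs) (u : EuclideanSpace ℝ (Fin d)) (hu : u = θs - θ₀)
    (τ : ℝ) (hτ : τ ≤ min (-(inner ℝ μp u : ℝ) / ‖u‖) ((inner ℝ μm u : ℝ) / ‖u‖))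
    (F : Set (EuclideanSpace ℝ (Fin d)))
    (hF : F = {x | ‖x - μp‖ ≤ τ} ∪ {x | ‖x + μm‖ ≤ τ}) :
    ∀ η : ℝ, 0 < η → ∀ K : ℕ,
      ∀ x θ : ℕ → EuclideanSpace ℝ (Fin d),
        (∀ t < K, x t ∈ F) →
        θ 0 = θ₀ →
        (∀ t, θ (t + 1)
          = θ t + (η / (1 + Real.exp ((inner ℝ (θ t) (x t) : ℝ)))) • x t) →
        θ K ≠ θs := by
  intro η hη K x θ hx h0 hstep hK
  have hF_halfspace : ∀ y ∈ F, ⟪y, u⟫ ≤ 0 := by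
    rw [hF]
    rintro y (hy | hy : ‖y - μp‖ ≤ τ ∨ ‖y + μm‖ ≤ τ)
    · exact inner_nonpos_of_norm_sub_le (hτ.trans (min_le_left _ _)) hy
    · rw [← sub_neg_eq_add] at hy
      refine inner_nonpos_of_norm_sub_le ?_ hy
      rw [inner_neg_left, neg_neg]
      exact hτ.trans (min_le_right _ _)
  have hdecr : ⟪θ K, u⟫ ≤ ⟪θ 0, u⟫ :=
    inner_le_inner_zero_of_nonneg_smul_steps (fun _ _ ↦ by positivity)
      (fun t ht ↦ hF_halfspace _ (hx t ht)) (fun t _ ↦ hstep t)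
  rw [hK, h0, ← sub_nonpos, ← inner_sub_left, ← hu, real_inner_self_nonpos, hu, sub_eq_zero] at hdecr
  exact hne hdecr.symm

theorem stmt_11 (d : ℕ) (μp μm θ₀ θs : EuclideanSpace ℝ (Fin d))
    (hne : θ₀ ≠ θs) (u : EuclideanSpace ℝ (Fin d)) (hu : u = θs - θ₀)
    (hμp : (inner ℝ μp u : ℝ) < 0) (hμm : (inner ℝ μm (-u) : ℝ) < 0)
    (τ : ℝ) (hτ : τ ≤ min (-(inner ℝ μp u : ℝ) / ‖u‖) ((inner ℝ μm u : ℝ) / ‖u‖))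
    (F : Set (EuclideanSpace ℝ (Fin d)))
    (hF : F = {x | ‖x - μp‖ ≤ τ} ∪ {x | ‖x + μm‖ ≤ τ}) :
    ∀ η : ℝ, 0 < η → ∀ K : ℕ,
      ∀ x θ : ℕ → EuclideanSpace ℝ (Fin d),
        (∀ t < K, x t ∈ F) →
        θ 0 = θ₀ →
        (∀ t, θ (t + 1)
          = θ t + (η / (1 + Real.exp ((inner ℝ (θ t) (x t) : ℝ)))) • x t) →
        θ K ≠ θs :=
  stmt_11_general d μp μm θ₀ θs hne u hu τ hτ F hF
end

section
/- Let T ∈ ℕ and let x_0, …, x_{T−1} be real numbers each equal to 1 or −1 (in one-sided form, x_t = 1 is a clean example and x_t = −1 is a poisoning example). Define θ_0 = 0 and θ_{t+1} = θ_t + x_t/(1 + exp(θ_t·x_t)). Then the number of indices t < T with x_t = 1 and θ_t ≤ 0 (clean examples misclassified by the current model) is at most the number of indices t < T with x_t = −1, plus 1. (This is the fully-online hard case: the attacker cannot cause more clean classification errors than the number of poisoning points it injects, up to one corner case.) -/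
/-!
Track the excess `d` of misclassified clean examples over poisoning examples seen so far. The
invariant is `d ≤ 1` together with `(d - 1) / 2 < θ`. A misclassified clean example (`θ ≤ 0`)
raises `d` by one and moves `θ` by `sigmoid (-θ) ≥ 1/2`; a poisoning example lowers `d` by one and
moves `θ` by `-sigmoid θ`, which is at most `1/2` when `θ ≤ 0`, and keeps `θ > -1/2` when `θ > 0`.
At `d = 1` the invariant forces `θ > 0`, so the next clean example is classified correctly and
`d` can never exceed `1`.
-/

open Real

lemma div_one_add_exp_mul_eq_mul_sigmoid (θ x : ℝ) :
    x / (1 + exp (θ * x)) = x * sigmoid (-(θ * x)) := by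
  rw [sigmoid_def, neg_neg, div_eq_mul_inv]

lemma half_le_sigmoid {θ : ℝ} (h : 0 ≤ θ) : 2⁻¹ ≤ sigmoid θ :=
  sigmoid_zero ▸ sigmoid_le h

lemma sigmoid_le_half {θ : ℝ} (h : θ ≤ 0) : sigmoid θ ≤ 2⁻¹ :=
  sigmoid_zero ▸ sigmoid_le h

lemma sigmoid_lt_add_half {θ : ℝ} (h : 0 < θ) : sigmoid θ < θ + 2⁻¹ := by
  rcases le_or_gt 1 θ with hθ | hθ
  · linarith [sigmoid_lt_one θ]
  · have hexp : 2 - θ ≤ 1 + exp (-θ) := by linarith [add_one_le_exp (-θ)]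
    calc sigmoid θ ≤ (2 - θ)⁻¹ := inv_anti₀ (by linarith) hexp
      _ < θ + 2⁻¹ := by
        rw [inv_lt_iff_one_lt_mul₀ (by linarith)]
        nlinarith

def ExcessInvariant (d : ℤ) (θ : ℝ) : Prop :=
  d ≤ 1 ∧ ((d : ℝ) - 1) / 2 < θ

namespace ExcessInvariant

variable {d : ℤ} {θ : ℝ}

lemma le_zero_of_nonpos (h : ExcessInvariant d θ) (hθ : θ ≤ 0) : d ≤ 0 := by
  have : (d : ℝ) < 1 := by linarith [h.2]
  exact Int.lt_add_one_iff.mp (by exact_mod_cast this)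

lemma clean_of_nonpos (h : ExcessInvariant d θ) (hθ : θ ≤ 0) :
    ExcessInvariant (d + 1) (θ + sigmoid (-θ)) := by
  have hd := h.le_zero_of_nonpos hθ
  refine ⟨by omega, ?_⟩
  push_cast
  linarith [h.2, half_le_sigmoid (neg_nonneg.mpr hθ)]

lemma clean (h : ExcessInvariant d θ) :
    ExcessInvariant d (θ + sigmoid (-θ)) :=
  ⟨h.1, by linarith [h.2, sigmoid_pos (-θ)]⟩

lemma poison (h : ExcessInvariant d θ) : ExcessInvariant (d - 1) (θ - sigmoid θ) := by
  refine ⟨by linarith [h.1], ?_⟩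
  have hd : (d : ℝ) ≤ 1 := by exact_mod_cast h.1
  push_cast
  rcases le_or_gt θ 0 with hθ | hθ
  · linarith [h.2, sigmoid_le_half hθ]
  · linarith [sigmoid_lt_add_half hθ]

lemma step (h : ExcessInvariant d θ) {x : ℝ} (hx : x = 1 ∨ x = -1) :
    ExcessInvariant (d + (if x = 1 ∧ θ ≤ 0 then 1 else 0) - (if x = -1 then 1 else 0))
      (θ + x / (1 + exp (θ * x))) := by
  rw [div_one_add_exp_mul_eq_mul_sigmoid]
  rcases hx with rfl | rfl
  · rcases le_or_gt θ 0 with hθ | hθ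
    · norm_num [hθ]
      exact h.clean_of_nonpos hθ
    · norm_num [not_le.mpr hθ]
      exact h.clean
  · norm_num [← sub_eq_add_neg]
    exact h.poison

end ExcessInvariant

open Classical in
theorem stmt_14 (T : ℕ) (x : ℕ → ℝ) (hx : ∀ t < T, x t = 1 ∨ x t = -1)
    (θ : ℕ → ℝ) (hθ0 : θ 0 = 0)
    (hθ : ∀ t, θ (t + 1) = θ t + x t / (1 + Real.exp (θ t * x t))) :
    ((Finset.range T).filter (fun t => x t = 1 ∧ θ t ≤ 0)).card ≤
      ((Finset.range T).filter (fun t => x t = -1)).card + 1 := by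
  have key : ∀ n ≤ T, ExcessInvariant
      (((Finset.range n).filter (fun t => x t = 1 ∧ θ t ≤ 0)).card -
        ((Finset.range n).filter (fun t => x t = -1)).card) (θ n) := by
    intro n
    induction n with
    | zero => intro _; norm_num [ExcessInvariant, hθ0]
    | succ n ih =>
      intro hn
      have := (ih (by omega)).step (hx n (by omega))
      simp only [Finset.card_filter, Finset.sum_range_succ, hθ] at this ⊢
      push_cast at this ⊢
      convert this using 1
      ring
  have := (key T le_rfl).1
  omega
end

section
/- Let (x_t)_{t ∈ ℕ} be real numbers each equal to 1 or −1, and let (θ_t) satisfy θ_{t+1} = θ_t + x_t/(1 + exp(θ_t·x_t)). Suppose for some m, n ∈ ℕ with n ≥ 1 that −1/2 ≤ θ_m ≤ 0 and that among x_m, x_{m+1}, …, x_{m+n−1} there are strictly more indices with x_t = 1 than with x_t = −1. Then there exists t' with m < t' ≤ m + n such that θ_{t'} > 0. -/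
/-!
While `θ ≤ 0`, a clean step raises `θ` by at least `1/2` and a poisoning step lowers it by at
most `1/2`. If `θ` stayed nonpositive on `(m, m + n]`, then `θ_{m+n} - θ_m` would be at least half
the surplus of clean over poisoning steps, i.e. at least `1/2`, and strictly more, since a clean
step `θ ↦ θ + 1/(1 + e^θ)` that lands in `(-∞, 0]` must start at `θ < 0`, where `1/(1 + e^θ) > 1/2`.
This contradicts `θ_m ≥ -1/2`.
-/

open Real Finset

lemma div_two_le_div_one_add_exp {x θ : ℝ} (hx : x = 1 ∨ x = -1) (hθ : θ ≤ 0) :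
    x / 2 ≤ x / (1 + exp (θ * x)) := by
  rcases hx with rfl | rfl
  · have : exp θ ≤ 1 := exp_le_one_iff.mpr hθ
    rw [mul_one]
    gcongr
    linarith
  · have : 1 ≤ exp (-θ) := one_le_exp (by linarith)
    rw [mul_neg_one, neg_div, neg_div, neg_le_neg_iff]
    gcongr
    linarith

lemma half_lt_one_div_one_add_exp {θ : ℝ} (h : θ + 1 / (1 + exp θ) ≤ 0) :
    1 / 2 < 1 / (1 + exp θ) := by
  have hθ : θ < 0 := by
    have : 0 < 1 / (1 + exp θ) := by positivity
    linarith
  have : exp θ < 1 := exp_lt_one_iff.mpr hθ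
  gcongr
  linarith

lemma sum_eq_card_filter_sub_card_filter {ι : Type*} {s : Finset ι} {x : ι → ℝ}
    [DecidablePred (x · = 1)] [DecidablePred (x · = -1)]
    (hx : ∀ t ∈ s, x t = 1 ∨ x t = -1) :
    ∑ t ∈ s, x t = #(s.filter (x · = 1)) - #(s.filter (x · = -1)) := by
  rw [card_filter, card_filter]
  push_cast
  rw [← sum_sub_distrib]
  refine sum_congr rfl fun t ht => ?_
  rcases hx t ht with h | h <;> norm_num [h]

open Classical in
theorem stmt_16_general (x : ℕ → ℝ) (hx : ∀ t, x t = 1 ∨ x t = -1)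
    (θ : ℕ → ℝ)
    (hθ : ∀ t, θ (t + 1) = θ t + x t / (1 + Real.exp (θ t * x t)))
    (m n : ℕ)
    (hθm : -(1 / 2) ≤ θ m ∧ θ m ≤ 0)
    (hcount : ((Finset.Ico m (m + n)).filter (fun t => x t = -1)).card <
      ((Finset.Ico m (m + n)).filter (fun t => x t = 1)).card) :
    ∃ t', m < t' ∧ t' ≤ m + n ∧ 0 < θ t' := by
  by_contra! hneg
  have hnonpos : ∀ t ∈ Ico m (m + n), θ t ≤ 0 ∧ θ (t + 1) ≤ 0 := by
    intro t ht
    rw [mem_Ico] at ht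
    refine ⟨?_, hneg _ (by omega) (by omega)⟩
    rcases ht.1.eq_or_lt with rfl | hmt
    · exact hθm.2
    · exact hneg t hmt (by omega)
  obtain ⟨t, ht, hxt⟩ : ∃ t ∈ Ico m (m + n), x t = 1 := by
    have := card_pos.mp (hcount.trans_le' (Nat.zero_le _))
    simpa only [Finset.Nonempty, mem_filter] using this
  have hsum : ∑ t ∈ Ico m (m + n), x t / 2 < θ (m + n) - θ m := by
    rw [← sum_Ico_sub θ (by omega)]
    refine sum_lt_sum (fun s hs => ?_) ⟨t, ht, ?_⟩
    · rw [hθ, add_sub_cancel_left]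
      exact div_two_le_div_one_add_exp (hx s) (hnonpos s hs).1
    · have hlands := (hnonpos t ht).2
      rw [hθ, hxt, mul_one] at hlands
      rw [hθ, add_sub_cancel_left, hxt, mul_one]
      exact half_lt_one_div_one_add_exp hlands
  have hsurplus : (1 : ℝ) ≤ ∑ t ∈ Ico m (m + n), x t := by
    rw [sum_eq_card_filter_sub_card_filter fun t _ => hx t]
    have : (#(filter (x · = -1) (Ico m (m + n))) : ℝ) + 1 ≤
        #(filter (x · = 1) (Ico m (m + n))) := by
      exact_mod_cast hcount
    linarith
  rw [← sum_div] at hsum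
  linarith [hneg (m + n) (by have := mem_Ico.mp ht; omega) le_rfl, hθm.1]

open Classical in
theorem stmt_16 (x : ℕ → ℝ) (hx : ∀ t, x t = 1 ∨ x t = -1)
    (θ : ℕ → ℝ)
    (hθ : ∀ t, θ (t + 1) = θ t + x t / (1 + Real.exp (θ t * x t)))
    (m n : ℕ) (hn : 1 ≤ n)
    (hθm : -(1 / 2) ≤ θ m ∧ θ m ≤ 0)
    (hcount : ((Finset.Ico m (m + n)).filter (fun t => x t = -1)).card <
      ((Finset.Ico m (m + n)).filter (fun t => x t = 1)).card) :
    ∃ t', m < t' ∧ t' ≤ m + n ∧ 0 < θ t' :=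
  stmt_16_general x hx θ hθ m n hθm hcount
end
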